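/- arXiv:1903.10866 — 4 statements merged into one kernel-verified Lean document; each statement's English description precedes it below -/
import Mathlib

section
/- Let k ≥ 1 and k+1 ≤ p ≤ 2k. The number of quadruples (a,b,c,d) of nonnegative integers, counted up to swapping c and d, satisfying 2a+b+2 = p and b+2c+2d+5 = 2k+1-p equals ⌊((k-2-⌊(p+1)/2⌋)/2)²⌋ + k - 1 - ⌊(p+1)/2⌋ when p ≤ 2k-4, and equals 0 when p > 2k-4. -/
lemma sumFormula (M : ℕ) :
    (∑ c ∈ Finset.range (M/2+1), (M+1-2*c)) = (M+2)^2/4 := by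
  induction M using Nat.twoStepInduction with
  | zero => decide
  | one => decide
  | more m ih _ =>
    have hr : (m+2)/2 + 1 = (m/2 + 1) + 1 := by omega
    rw [hr, Finset.sum_range_succ]
    have hcong : (∑ c ∈ Finset.range (m/2+1), (m+2+1-2*c))
        = (∑ c ∈ Finset.range (m/2+1), (m+1-2*c)) + 2*(m/2+1) := by
      rw [Finset.sum_congr rfl (g := fun c => (m+1-2*c) + 2)]
      · rw [Finset.sum_add_distrib, Finset.sum_const, Finset.card_range,
          smul_eq_mul]
        ring
      · intro c hc
        simp only [Finset.mem_range] at hc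
        omega
    rw [hcong, ih]
    have h1 : (m+2+2)^2 = (m+2)^2 + (4*m+12) := by ring
    omega

lemma pairCard (M : ℕ) :
    ((Finset.range (M+1) ×ˢ Finset.range (M+1)).filter
      (fun cd : ℕ × ℕ => cd.1 ≤ cd.2 ∧ cd.1 + cd.2 ≤ M)).card = (M+2)^2/4 := by
  rw [Finset.card_filter, Finset.sum_product]
  have inner : ∀ c ∈ Finset.range (M+1),
      (∑ d ∈ Finset.range (M+1), if c ≤ d ∧ c + d ≤ M then 1 else 0)
        = if 2*c ≤ M then M+1-2*c else 0 := by
    intro c _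
    rw [← Finset.card_filter]
    by_cases h : 2*c ≤ M
    · rw [if_pos h]
      have : (Finset.range (M+1)).filter (fun d => c ≤ d ∧ c + d ≤ M)
          = Finset.Icc c (M-c) := by
        ext d; simp [Finset.mem_Icc, Finset.mem_range]; omega
      rw [this, Nat.card_Icc]; omega
    · rw [if_neg h]
      have : (Finset.range (M+1)).filter (fun d => c ≤ d ∧ c + d ≤ M)
          = ∅ := by
        ext d; simp [Finset.mem_range]; omega
      rw [this, Finset.card_empty]
  rw [Finset.sum_congr rfl inner, ← Finset.sum_filter]
  have : (Finset.range (M+1)).filter (fun c => 2*c ≤ M) = Finset.range (M/2+1) := by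
    ext c; simp [Finset.mem_range]; omega
  rw [this, sumFormula]

lemma pairNcard (M : ℕ) :
    Set.ncard {cd : ℕ × ℕ | cd.1 ≤ cd.2 ∧ cd.1 + cd.2 ≤ M} = (M+2)^2/4 := by
  have hset : {cd : ℕ × ℕ | cd.1 ≤ cd.2 ∧ cd.1 + cd.2 ≤ M}
      = ↑((Finset.range (M+1) ×ˢ Finset.range (M+1)).filter
        (fun cd : ℕ × ℕ => cd.1 ≤ cd.2 ∧ cd.1 + cd.2 ≤ M)) := by
    ext cd
    simp [Finset.mem_filter, Finset.mem_product, Finset.mem_range]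
    omega
  rw [hset, Set.ncard_coe_finset, pairCard]

/-- Count of quadruples (a,b,c,d) of nonnegative integers up to swapping c,d
(representatives with c ≤ d) with 2a+b+2 = p and b+2c+2d+5 = 2k+1-p. -/
theorem stmt3 (k p : ℕ) (hk : 1 ≤ k) (h1 : k + 1 ≤ p) (h2 : p ≤ 2*k) :
    (p ≤ 2*k - 4 →
      Set.ncard {t : ℕ × ℕ × ℕ × ℕ | t.2.2.1 ≤ t.2.2.2 ∧
          2*t.1 + t.2.1 + 2 = p ∧ t.2.1 + 2*t.2.2.1 + 2*t.2.2.2 + 5 = 2*k+1-p}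
        = (k - 2 - (p+1)/2)^2 / 4 + (k - 1 - (p+1)/2)) ∧
    (2*k - 4 < p →
      Set.ncard {t : ℕ × ℕ × ℕ × ℕ | t.2.2.1 ≤ t.2.2.2 ∧
          2*t.1 + t.2.1 + 2 = p ∧ t.2.1 + 2*t.2.2.1 + 2*t.2.2.2 + 5 = 2*k+1-p}
        = 0) := by
  set Q : Set (ℕ × ℕ × ℕ × ℕ) := {t : ℕ × ℕ × ℕ × ℕ | t.2.2.1 ≤ t.2.2.2 ∧
      2*t.1 + t.2.1 + 2 = p ∧ t.2.1 + 2*t.2.2.1 + 2*t.2.2.2 + 5 = 2*k+1-p} with hQ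
  constructor
  · intro hp
    set M : ℕ := (2*k - 4 - p)/2 with hM
    have inj : Set.InjOn (fun t : ℕ × ℕ × ℕ × ℕ => (t.2.2.1, t.2.2.2)) Q := by
      rintro ⟨a, b, c, d⟩ ht ⟨a', b', c', d'⟩ ht' h
      simp only [hQ, Set.mem_setOf_eq] at ht ht'
      obtain ⟨hcd, e1, e2⟩ := ht
      obtain ⟨hcd', e1', e2'⟩ := ht'
      try dsimp only at hcd e1 e2 hcd' e1' e2' h ⊢
      simp only [Prod.mk.injEq] at h ⊢
      obtain ⟨hc, hd⟩ := h
      subst hc; subst hd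
      refine ⟨?_, ?_, rfl, rfl⟩ <;> omega
    have img : (fun t : ℕ × ℕ × ℕ × ℕ => (t.2.2.1, t.2.2.2)) '' Q
        = {cd : ℕ × ℕ | cd.1 ≤ cd.2 ∧ cd.1 + cd.2 ≤ M} := by
      ext ⟨c, d⟩
      simp only [Set.mem_image, Set.mem_setOf_eq, hQ]
      constructor
      · rintro ⟨⟨a, b, c', d'⟩, ht, h⟩
        obtain ⟨hcd, e1, e2⟩ := ht
        try dsimp only at hcd e1 e2 h
        simp only [Prod.mk.injEq] at h
        obtain ⟨hc, hd⟩ := h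
        subst hc; subst hd
        try dsimp only
        constructor
        · exact hcd
        · omega
      · rintro ⟨hcd, hsum⟩
        try dsimp only at hcd hsum
        refine ⟨⟨(p - 2 - (2*k - 4 - p - 2*(c+d)))/2, 2*k - 4 - p - 2*(c+d), c, d⟩,
          ⟨hcd, ?_, ?_⟩, rfl⟩ <;> dsimp only <;> omega
    have key := Set.ncard_image_of_injOn inj
    rw [img, pairNcard] at key
    rw [← key]
    have hn : M = k - 2 - (p+1)/2 := by omega
    set n := k - 2 - (p+1)/2 with hn'
    rw [hn]
    have h1' : (n+2)^2 = n^2 + (4*n+4) := by ring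
    have hk1 : k - 1 - (p+1)/2 = n + 1 := by omega
    omega
  · intro hp
    have hempty : Q = ∅ := by
      ext ⟨a, b, c, d⟩
      simp only [hQ, Set.mem_setOf_eq, Set.mem_empty_iff_false, iff_false]
      rintro ⟨hcd, e1, e2⟩
      try dsimp only at e1 e2
      omega
    rw [hempty, Set.ncard_empty]
end

section
/- Let k ≥ 1 and k+1 ≤ p ≤ 2k. The number of quadruples (a,b,c,d) of nonnegative integers, counted up to swapping c and d, satisfying 2a+c+d+3 = p and 2b+c+d+4 = 2k+1-p equals (1/2)⌊(p-1)/2⌋² - (1/2)⌊(p-1)/2⌋(2p-2k-1) + (1/2)(p-k-1)(p-k). -/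
lemma tri_card (n : ℕ) :
    ((Finset.range (n+1)).biUnion
      (fun b => (Finset.range (n+1-b)).image (fun c => (b, c)))).card * 2
      = (n+1)*(n+2) := by
  rw [Finset.card_biUnion (by
    intro x hx y hy hxy
    simp only [Finset.disjoint_left, Finset.mem_image, Finset.mem_range]
    rintro a ⟨c, hc, rfl⟩ ⟨c', hc', heq⟩
    exact hxy (congrArg Prod.fst heq).symm)]
  have h1 : ∀ b ∈ Finset.range (n+1),
      ((Finset.range (n+1-b)).image (fun c => (b, c))).card = n+1-b := by
    intro b _
    rw [Finset.card_image_of_injective _ (fun x y h => (Prod.mk.injEq _ _ _ _).mp h |>.2)]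
    simp
  rw [Finset.sum_congr rfl h1]
  have h2 : ∀ b ∈ Finset.range (n+1), n+1-b = (fun j => j+1) (n+1-1-b) := by
    intro b hb; simp at hb; simp; omega
  rw [Finset.sum_congr rfl h2]
  rw [Finset.sum_range_reflect (fun j => j+1) (n+1)]
  rw [Finset.sum_add_distrib, Finset.sum_const, Finset.card_range]
  have h3 : (∑ i ∈ Finset.range (n+1), i) * 2 = (n+1)*n := by
    simpa using Finset.sum_range_id_mul_two (n+1)
  simp only [smul_eq_mul, mul_one]
  nlinarith [h3]

/-- Quadruples counted up to swapping c and d: representatives with c ≤ d. -/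
theorem stmt10 (k p : ℤ) (hk : 1 ≤ k) (h1 : k+1 ≤ p) (h2 : p ≤ 2*k) :
    (Set.ncard {t : ℤ × ℤ × ℤ × ℤ |
        0 ≤ t.1 ∧ 0 ≤ t.2.1 ∧ 0 ≤ t.2.2.1 ∧ 0 ≤ t.2.2.2 ∧ t.2.2.1 ≤ t.2.2.2 ∧
        2*t.1 + t.2.2.1 + t.2.2.2 + 3 = p ∧ 2*t.2.1 + t.2.2.1 + t.2.2.2 + 4 = 2*k+1-p} : ℚ)
      = (1/2) * (((p-1)/2 : ℤ) : ℚ)^2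
        - (1/2) * (((p-1)/2 : ℤ) : ℚ) * (2*(p:ℚ) - 2*(k:ℚ) - 1)
        + (1/2) * ((p:ℚ) - (k:ℚ) - 1) * ((p:ℚ) - (k:ℚ)) := by
  by_cases hp : 2*k - 2 ≤ p
  · -- empty case
    have hS : {t : ℤ × ℤ × ℤ × ℤ |
        0 ≤ t.1 ∧ 0 ≤ t.2.1 ∧ 0 ≤ t.2.2.1 ∧ 0 ≤ t.2.2.2 ∧ t.2.2.1 ≤ t.2.2.2 ∧
        2*t.1 + t.2.2.1 + t.2.2.2 + 3 = p ∧ 2*t.2.1 + t.2.2.1 + t.2.2.2 + 4 = 2*k+1-p}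
        = (∅ : Set (ℤ × ℤ × ℤ × ℤ)) := by
      ext ⟨a,b,c,d⟩
      simp only [Set.mem_setOf_eq, Set.mem_empty_iff_false, iff_false, not_and]
      intro ha hb hc hd hcd he1 he2
      omega
    rw [hS, Set.ncard_empty]
    have keyZ : ((p-1)/2)^2 - ((p-1)/2)*(2*p-2*k-1) + (p-k-1)*(p-k) = 0 := by
      have hpv : p = 2*k-2 ∨ p = 2*k-1 ∨ p = 2*k := by omega
      rcases hpv with h | h | h
      · have hq2 : (p-1)/2 = k-2 := by omega
        rw [hq2, h]; ring
      · have hq2 : (p-1)/2 = k-1 := by omega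
        rw [hq2, h]; ring
      · have hq2 : (p-1)/2 = k-1 := by omega
        rw [hq2, h]; ring
    have keyQ := congrArg (fun z : ℤ => (z:ℚ)) keyZ
    push_cast at keyQ ⊢
    linarith
  · -- main case : p ≤ 2*k - 3
    set M : ℤ := 2*k - 3 - p with hM
    set nm : ℕ := (M/2).toNat with hnm
    set T : Finset (ℕ × ℕ) := (Finset.range (nm+1)).biUnion
      (fun b => (Finset.range (nm+1-b)).image (fun c => (b, c))) with hT
    set f : ℕ × ℕ → ℤ × ℤ × ℤ × ℤ :=
      fun bc => (p - k + bc.1, (bc.1 : ℤ), (bc.2 : ℤ), M - 2*bc.1 - bc.2) with hf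
    have hmemT : ∀ bc : ℕ × ℕ, bc ∈ T ↔ bc.1 + bc.2 ≤ nm := by
      rintro ⟨b, c⟩
      simp only [hT, Finset.mem_biUnion, Finset.mem_range, Finset.mem_image,
        Prod.mk.injEq]
      constructor
      · rintro ⟨b', hb', c', hc', rfl, rfl⟩; omega
      · intro h; exact ⟨b, by omega, c, by omega, rfl, rfl⟩
    have hSF : {t : ℤ × ℤ × ℤ × ℤ |
        0 ≤ t.1 ∧ 0 ≤ t.2.1 ∧ 0 ≤ t.2.2.1 ∧ 0 ≤ t.2.2.2 ∧ t.2.2.1 ≤ t.2.2.2 ∧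
        2*t.1 + t.2.2.1 + t.2.2.2 + 3 = p ∧ 2*t.2.1 + t.2.2.1 + t.2.2.2 + 4 = 2*k+1-p}
        = ↑(T.image f) := by
      ext ⟨a, b, c, d⟩
      simp only [Set.mem_setOf_eq, Finset.coe_image, Set.mem_image, Finset.mem_coe,
        hmemT, hf, Prod.mk.injEq, Prod.exists]
      constructor
      · rintro ⟨ha, hb, hc, hd, hcd, he1, he2⟩
        refine ⟨b.toNat, c.toNat, by omega, by omega, by omega, by omega, by omega⟩
      · rintro ⟨bn, cn, hle, e1, e2, e3, e4⟩
        refine ⟨by omega, by omega, by omega, by omega, by omega, by omega, by omega⟩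
    rw [hSF, Set.ncard_coe_finset]
    have hinj : Function.Injective f := by
      rintro ⟨b, c⟩ ⟨b', c'⟩ h
      simp only [hf, Prod.mk.injEq] at h
      obtain ⟨-, h2, h3, -⟩ := h
      exact Prod.ext (by exact_mod_cast h2) (by exact_mod_cast h3)
    rw [Finset.card_image_of_injective _ hinj]
    have hT2 : T.card * 2 = (nm+1)*(nm+2) := tri_card nm
    have hTQ : (T.card : ℚ) * 2 = ((nm:ℚ)+1)*((nm:ℚ)+2) := by exact_mod_cast hT2
    have hcases : (2*((p-1)/2) = p-1 ∧ (nm:ℤ) = k-2-((p-1)/2))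
        ∨ (2*((p-1)/2) = p-2 ∧ (nm:ℤ) = k-3-((p-1)/2)) := by omega
    rcases hcases with ⟨hq, hn⟩ | ⟨hq, hn⟩
    · have hpQ : (p:ℚ) = 2*(((p-1)/2 : ℤ):ℚ) + 1 := by exact_mod_cast (by omega : p = 2*((p-1)/2) + 1)
      have hnQ : (nm:ℚ) = (k:ℚ) - 2 - (((p-1)/2 : ℤ):ℚ) := by exact_mod_cast hn
      rw [hnQ] at hTQ
      rw [hpQ]
      linear_combination hTQ / 2
    · have hpQ : (p:ℚ) = 2*(((p-1)/2 : ℤ):ℚ) + 2 := by exact_mod_cast (by omega : p = 2*((p-1)/2) + 2)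
      have hnQ : (nm:ℚ) = (k:ℚ) - 3 - (((p-1)/2 : ℤ):ℚ) := by exact_mod_cast hn
      rw [hnQ] at hTQ
      rw [hpQ]
      linear_combination hTQ / 2
end

section
/- Let k ≥ 1 and k+1 ≤ p ≤ 2k. The number of quadruples (a,b,c,d) of nonnegative integers, counted up to swapping c and d, satisfying 2a+c+d+3 = 2k+1-p and 2b+c+d+4 = p equals (1/2)⌊p/2⌋² - (1/2)⌊p/2⌋(2p-2k-1) + (1/2)(p-k-1)(p-k). -/
/-!
Subtracting the two equations gives b = a + (p - k - 1), so a quadruple is determined by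
(a, c), with d = 2k - 2 - p - 2a - c; the condition c ≤ d says a + c < n := ⌊(2k - p)/2⌋.
Hence the quadruples correspond to the lattice points of a triangle, of which there are
n(n + 1)/2, and comparing with the right-hand side is a parity check on p.
-/

open Finset in
theorem ncard_add_lt_mul_two (n : ℕ) :
    {x : ℕ × ℕ | x.1 + x.2 < n}.ncard * 2 = n * (n + 1) := by
  have hunion : {x : ℕ × ℕ | x.1 + x.2 < n} = ↑((range n).biUnion antidiagonal) := by
    ext x
    simp
  have hdisj : (range n : Set ℕ).PairwiseDisjoint antidiagonal := by
    intro s _ t _ hst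
    simp only [Function.onFun, disjoint_left, HasAntidiagonal.mem_antidiagonal]
    omega
  rw [hunion, Set.ncard_coe_finset, card_biUnion hdisj]
  simp only [Nat.card_antidiagonal]
  have hgauss := sum_range_id_mul_two (n + 1)
  rw [sum_range_succ'] at hgauss
  simpa [Nat.mul_comm] using hgauss

theorem quadruples_eq_image (k p : ℤ) (h1 : k + 1 ≤ p) (h2 : p ≤ 2 * k) :
    {t : ℤ × ℤ × ℤ × ℤ |
        0 ≤ t.1 ∧ 0 ≤ t.2.1 ∧ 0 ≤ t.2.2.1 ∧ 0 ≤ t.2.2.2 ∧ t.2.2.1 ≤ t.2.2.2 ∧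
        2*t.1 + t.2.2.1 + t.2.2.2 + 3 = 2*k+1-p ∧ 2*t.2.1 + t.2.2.1 + t.2.2.2 + 4 = p}
      = (fun x : ℕ × ℕ => ((x.1 : ℤ), x.1 + (p - k - 1), (x.2 : ℤ), 2*k - 2 - p - 2*x.1 - x.2)) ''
          {x | x.1 + x.2 < ((2*k - p) / 2).toNat} := by
  ext ⟨a, b, c, d⟩
  simp only [Set.mem_ofPred_eq, Set.mem_image, Prod.ext_iff, Prod.exists]
  constructor
  · rintro ⟨ha, hb, hc, hd, hcd, e1, e2⟩
    exact ⟨a.toNat, c.toNat, by omega, by omega, by omega, by omega, by omega⟩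
  · rintro ⟨x, y, hxy, rfl, rfl, rfl, rfl⟩
    omega

theorem triangle_number_eq (k p : ℤ) (n : ℕ) (hn : (n : ℤ) = (2*k - p) / 2) :
    ((n * (n + 1) : ℕ) : ℚ) / 2
      = (1/2) * ((p/2 : ℤ) : ℚ)^2
        - (1/2) * ((p/2 : ℤ) : ℚ) * (2*(p:ℚ) - 2*(k:ℚ) - 1)
        + (1/2) * ((p:ℚ) - (k:ℚ) - 1) * ((p:ℚ) - (k:ℚ)) := by
  have hnq : (n : ℚ) = ((n : ℤ) : ℚ) := rfl
  push_cast
  rw [hnq]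
  obtain ⟨q, rfl | rfl⟩ := Int.even_or_odd' p
  · rw [hn, show (2*k - 2*q) / 2 = k - q by omega, show 2*q / 2 = q by omega]
    push_cast
    ring
  · rw [hn, show (2*k - (2*q + 1)) / 2 = k - q - 1 by omega, show (2*q + 1) / 2 = q by omega]
    push_cast
    ring

theorem stmt11_general (k p : ℤ) (h1 : k+1 ≤ p) (h2 : p ≤ 2*k) :
    (Set.ncard {t : ℤ × ℤ × ℤ × ℤ |
        0 ≤ t.1 ∧ 0 ≤ t.2.1 ∧ 0 ≤ t.2.2.1 ∧ 0 ≤ t.2.2.2 ∧ t.2.2.1 ≤ t.2.2.2 ∧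
        2*t.1 + t.2.2.1 + t.2.2.2 + 3 = 2*k+1-p ∧ 2*t.2.1 + t.2.2.1 + t.2.2.2 + 4 = p} : ℚ)
      = (1/2) * ((p/2 : ℤ) : ℚ)^2
        - (1/2) * ((p/2 : ℤ) : ℚ) * (2*(p:ℚ) - 2*(k:ℚ) - 1)
        + (1/2) * ((p:ℚ) - (k:ℚ) - 1) * ((p:ℚ) - (k:ℚ)) := by
  have hinj : Function.Injective
      (fun x : ℕ × ℕ => ((x.1 : ℤ), x.1 + (p - k - 1), (x.2 : ℤ), 2*k - 2 - p - 2*x.1 - x.2)) := by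
    rintro ⟨x, y⟩ ⟨x', y'⟩ h
    simp only [Prod.ext_iff, Nat.cast_inj] at h
    exact Prod.ext h.1 h.2.2.1
  rw [quadruples_eq_image k p h1 h2, Set.ncard_image_of_injective _ hinj,
    ← triangle_number_eq k p _ (Int.toNat_of_nonneg (by omega)), ← ncard_add_lt_mul_two]
  push_cast
  ring

/-- Quadruples counted up to swapping c and d: representatives with c ≤ d. -/
theorem stmt11 (k p : ℤ) (hk : 1 ≤ k) (h1 : k+1 ≤ p) (h2 : p ≤ 2*k) :
    (Set.ncard {t : ℤ × ℤ × ℤ × ℤ |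
        0 ≤ t.1 ∧ 0 ≤ t.2.1 ∧ 0 ≤ t.2.2.1 ∧ 0 ≤ t.2.2.2 ∧ t.2.2.1 ≤ t.2.2.2 ∧
        2*t.1 + t.2.2.1 + t.2.2.2 + 3 = 2*k+1-p ∧ 2*t.2.1 + t.2.2.1 + t.2.2.2 + 4 = p} : ℚ)
      = (1/2) * ((p/2 : ℤ) : ℚ)^2
        - (1/2) * ((p/2 : ℤ) : ℚ) * (2*(p:ℚ) - 2*(k:ℚ) - 1)
        + (1/2) * ((p:ℚ) - (k:ℚ) - 1) * ((p:ℚ) - (k:ℚ)) :=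
  stmt11_general k p h1 h2
end

section
/- Let p, q, r be positive integers with p ≥ q ≥ r and p+q+r = 2k+1. Define ν as follows: the number of solutions in nonnegative integers of exactly one of four systems. System A: p = 2a+b+c+3, q = b+1, r = c+1 (counted once). Systems B₁: p = 2a+b+2, q = b+c+2, r = c+1; B₂: p = b+c+2, q = 2a+b+2, r = c+1; B₃: p = b+c+2, q = c+1, r = 2a+b+2 (each counted once, but when q = r the systems related by swapping the roles of q and r are identified). Then: ν = 0 if p = q = r; ν = 1 if exactly two of p,q,r are equal; ν = 2 if p > q > r and p > k; ν = 3 if p > q > r and p ≤ k. -/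
lemma mset_pair_eq {α : Type*} (a b d e : α) :
    ({a,b} : Multiset α) = {d,e} ↔ (a=d∧b=e)∨(a=e∧b=d) := by
  constructor
  · intro h
    rw [show ({a,b}:Multiset α) = a ::ₘ {b} from rfl,
        show ({d,e}:Multiset α) = d ::ₘ {e} from rfl, Multiset.cons_eq_cons] at h
    rcases h with ⟨h1, h2⟩ | ⟨hne, cs, h1, h2⟩
    · exact Or.inl ⟨h1, Multiset.singleton_inj.mp h2⟩
    · have hc : cs = 0 := by
        have := congrArg Multiset.card h1
        simp at this
        exact this
      subst hc
      simp only [Multiset.cons_zero] at h1 h2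
      exact Or.inr ⟨(Multiset.singleton_inj.mp h2).symm, Multiset.singleton_inj.mp h1⟩
  · rintro (⟨rfl,rfl⟩|⟨rfl,rfl⟩)
    · rfl
    · exact Multiset.pair_comm a b

lemma mset_triple_eq (a b c d e f : ℕ) :
    ({a,b,c} : Multiset ℕ) = {d,e,f} ↔
      (a=d∧b=e∧c=f) ∨ (a=d∧b=f∧c=e) ∨ (a=e∧b=d∧c=f) ∨
      (a=e∧b=f∧c=d) ∨ (a=f∧b=d∧c=e) ∨ (a=f∧b=e∧c=d) := by
  constructor
  · intro h
    rw [show ({a,b,c}:Multiset ℕ) = a ::ₘ {b,c} from rfl,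
        show ({d,e,f}:Multiset ℕ) = d ::ₘ {e,f} from rfl, Multiset.cons_eq_cons] at h
    rcases h with ⟨rfl, h2⟩ | ⟨hne, cs, h1, h2⟩
    · rcases (mset_pair_eq b c e f).mp h2 with ⟨rfl,rfl⟩|⟨rfl,rfl⟩ <;> tauto
    · obtain ⟨x, rfl⟩ : ∃ x, cs = {x} := by
        have := congrArg Multiset.card h1
        simp at this
        exact Multiset.card_eq_one.mp this
      rcases (mset_pair_eq b c d x).mp h1 with ⟨hb,hc⟩|⟨hb,hc⟩ <;>
        rcases (mset_pair_eq e f a x).mp h2 with ⟨he,hf⟩|⟨he,hf⟩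
      · exact Or.inr (Or.inr (Or.inl ⟨he.symm, hb, hc.trans hf.symm⟩))
      · exact Or.inr (Or.inr (Or.inr (Or.inr (Or.inl ⟨hf.symm, hb, hc.trans he.symm⟩))))
      · exact Or.inr (Or.inr (Or.inr (Or.inl ⟨he.symm, hb.trans hf.symm, hc⟩)))
      · exact Or.inr (Or.inr (Or.inr (Or.inr (Or.inr ⟨hf.symm, hb.trans he.symm, hc⟩))))
  · rintro (⟨rfl,rfl,rfl⟩|⟨rfl,rfl,rfl⟩|⟨rfl,rfl,rfl⟩|⟨rfl,rfl,rfl⟩|⟨rfl,rfl,rfl⟩|⟨rfl,rfl,rfl⟩) <;>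
      ((ext x
        simp only [Multiset.insert_eq_cons, Multiset.count_cons, Multiset.count_singleton]) <;>
        (split_ifs <;> omega))

section Aux

variable (k p q r : ℕ)

private lemma setA_gt (hr : 0 < r) (hrq : r ≤ q) (hqp : q ≤ p)
    (hsum : p + q + r = 2*k+1) (hkp : k < p) :
    {t : ℕ × ℕ × ℕ | t.2.1 ≤ t.2.2 ∧
      ({p, q, r} : Multiset ℕ) = {2*t.1 + t.2.1 + t.2.2 + 3, t.2.1 + 1, t.2.2 + 1}}
      = {(p-k-1, r-1, q-1)} := by
  ext ⟨a,b,c⟩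
  simp only [Set.mem_setOf_eq, mset_triple_eq, Set.mem_singleton_iff, Prod.mk.injEq]
  omega

private lemma setA_le (hr : 0 < r) (hrq : r ≤ q) (hqp : q ≤ p)
    (hsum : p + q + r = 2*k+1) (hpk : p ≤ k) :
    {t : ℕ × ℕ × ℕ | t.2.1 ≤ t.2.2 ∧
      ({p, q, r} : Multiset ℕ) = {2*t.1 + t.2.1 + t.2.2 + 3, t.2.1 + 1, t.2.2 + 1}}
      = ∅ := by
  ext ⟨a,b,c⟩
  simp only [Set.mem_setOf_eq, mset_triple_eq, Set.mem_empty_iff_false, iff_false, not_and, not_or]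
  omega

private lemma setB_eq_all (hr : 0 < r) (hpq : p = q) (hqr : q = r)
    (hsum : p + q + r = 2*k+1) :
    {t : ℕ × ℕ × ℕ |
      ({p, q, r} : Multiset ℕ) = {2*t.1 + t.2.1 + 2, t.2.1 + t.2.2 + 2, t.2.2 + 1}} = ∅ := by
  ext ⟨a,b,c⟩
  simp only [Set.mem_setOf_eq, mset_triple_eq, Set.mem_empty_iff_false, iff_false, not_or]
  omega

private lemma setB_qr_gt (hr : 0 < r) (hrq : r ≤ q) (hqr : q = r) (hqp : q < p)
    (hsum : p + q + r = 2*k+1) (hkp : k < p) :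
    {t : ℕ × ℕ × ℕ |
      ({p, q, r} : Multiset ℕ) = {2*t.1 + t.2.1 + 2, t.2.1 + t.2.2 + 2, t.2.2 + 1}} = ∅ := by
  ext ⟨a,b,c⟩
  simp only [Set.mem_setOf_eq, mset_triple_eq, Set.mem_empty_iff_false, iff_false, not_or]
  omega

private lemma setB_two_eq (hr : 0 < r) (hrq : r < p) (hpk : p ≤ k)
    (hpq : p = q ∨ q = r) (hrq' : r ≤ q) (hqp : q ≤ p)
    (hsum : p + q + r = 2*k+1) :
    {t : ℕ × ℕ × ℕ |
      ({p, q, r} : Multiset ℕ) = {2*t.1 + t.2.1 + 2, t.2.1 + t.2.2 + 2, t.2.2 + 1}}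
      = {(k-p, p-r-1, r-1)} := by
  ext ⟨a,b,c⟩
  simp only [Set.mem_setOf_eq, mset_triple_eq, Set.mem_singleton_iff, Prod.mk.injEq]
  omega

private lemma setB_strict_gt (hr : 0 < r) (hrq : r < q) (hqp : q < p)
    (hsum : p + q + r = 2*k+1) (hkp : k < p) :
    {t : ℕ × ℕ × ℕ |
      ({p, q, r} : Multiset ℕ) = {2*t.1 + t.2.1 + 2, t.2.1 + t.2.2 + 2, t.2.2 + 1}}
      = {(k-q, q-r-1, r-1)} := by
  ext ⟨a,b,c⟩
  simp only [Set.mem_setOf_eq, mset_triple_eq, Set.mem_singleton_iff, Prod.mk.injEq]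
  omega

set_option maxHeartbeats 2000000 in
private lemma setB_strict_le (hr : 0 < r) (hrq : r < q) (hqp : q < p)
    (hsum : p + q + r = 2*k+1) (hpk : p ≤ k) :
    {t : ℕ × ℕ × ℕ |
      ({p, q, r} : Multiset ℕ) = {2*t.1 + t.2.1 + 2, t.2.1 + t.2.2 + 2, t.2.2 + 1}}
      = {(k-q, q-r-1, r-1), (k-p, p-r-1, r-1), (k-p, p-q-1, q-1)} := by
  ext ⟨a,b,c⟩
  simp only [Set.mem_setOf_eq, mset_triple_eq, Set.mem_insert_iff, Set.mem_singleton_iff,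
    Prod.mk.injEq]
  omega

end Aux

/-- ν is the number of realizations: solutions of system A counted up to the
symmetry b ↔ c (representatives with b ≤ c), plus solutions of the systems B₁,
B₂, B₃ where, when q = r, systems related by swapping the roles of q and r are
identified; both counts are expressed via multiset equalities. -/
theorem stmt19 (k p q r : ℕ) (hk : 0 < k) (hr : 0 < r) (hrq : r ≤ q) (hqp : q ≤ p)
    (hsum : p + q + r = 2*k+1) :
    ∀ ν : ℕ,
      ν = Set.ncard {t : ℕ × ℕ × ℕ | t.2.1 ≤ t.2.2 ∧
            ({p, q, r} : Multiset ℕ) = {2*t.1 + t.2.1 + t.2.2 + 3, t.2.1 + 1, t.2.2 + 1}}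
        + Set.ncard {t : ℕ × ℕ × ℕ |
            ({p, q, r} : Multiset ℕ) = {2*t.1 + t.2.1 + 2, t.2.1 + t.2.2 + 2, t.2.2 + 1}} →
      ((p = q ∧ q = r → ν = 0) ∧
       ((p = q ∧ q ≠ r) ∨ (p ≠ q ∧ q = r) → ν = 1) ∧
       (q < p ∧ r < q ∧ k < p → ν = 2) ∧
       (q < p ∧ r < q ∧ p ≤ k → ν = 3)) := by
  intro ν hν
  refine ⟨?_, ?_, ?_, ?_⟩
  · rintro ⟨hpq, hqr⟩
    rw [setA_le k p q r hr hrq hqp hsum (by omega), setB_eq_all k p q r hr hpq hqr hsum, Set.ncard_empty] at hν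
    omega
  · rintro (⟨hpq, hqr⟩ | ⟨hpq, hqr⟩)
    · rw [setA_le k p q r hr hrq hqp hsum (by omega),
        setB_two_eq k p q r hr (by omega) (by omega) (Or.inl hpq) hrq hqp hsum,
        Set.ncard_empty, Set.ncard_singleton] at hν
      omega
    · rcases le_or_gt p k with hpk | hkp
      · rw [setA_le k p q r hr hrq hqp hsum hpk,
          setB_two_eq k p q r hr (by omega) hpk (Or.inr hqr) hrq hqp hsum,
          Set.ncard_empty, Set.ncard_singleton] at hν
        omega
      · rw [setA_gt k p q r hr hrq hqp hsum hkp,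
          setB_qr_gt k p q r hr hrq hqr (by omega) hsum hkp,
          Set.ncard_singleton, Set.ncard_empty] at hν
        omega
  · rintro ⟨hqp', hrq', hkp⟩
    rw [setA_gt k p q r hr hrq hqp hsum hkp,
      setB_strict_gt k p q r hr hrq' hqp' hsum hkp,
      Set.ncard_singleton, Set.ncard_singleton] at hν
    omega
  · rintro ⟨hqp', hrq', hpk⟩
    have h12 : ((k-q, q-r-1, r-1) : ℕ×ℕ×ℕ) ∉
        ({(k-p, p-r-1, r-1), (k-p, p-q-1, q-1)} : Set (ℕ×ℕ×ℕ)) := by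
      simp only [Set.mem_insert_iff, Set.mem_singleton_iff, Prod.mk.injEq, not_or]
      omega
    have h23 : ((k-p, p-r-1, r-1) : ℕ×ℕ×ℕ) ∉ ({(k-p, p-q-1, q-1)} : Set (ℕ×ℕ×ℕ)) := by
      simp only [Set.mem_singleton_iff, Prod.mk.injEq]
      omega
    rw [setA_le k p q r hr hrq hqp hsum hpk,
      setB_strict_le k p q r hr hrq' hqp' hsum hpk,
      Set.ncard_empty, Set.ncard_insert_of_notMem h12,
      Set.ncard_insert_of_notMem h23, Set.ncard_singleton] at hν
    omega
end
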